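/- In the hyperbolic numbers, the geometric series ∑_{n=0}^∞ zⁿ converges for every z = x + jy with |x+y| < 1 and |x−y| < 1 (the open diamond with vertices ±1, ±j). -/

import Mathlib

/-!
In the basis of idempotents `e₊ = (1 + j)/2`, `e₋ = (1 - j)/2` multiplication of hyperbolic
numbers is componentwise, and `x + jy = (x + y) e₊ + (x - y) e₋`. Hence
`(x + jy)ⁿ = (x + y)ⁿ e₊ + (x - y)ⁿ e₋`, and the geometric series splits into the two real
geometric series with ratios `x + y` and `x - y`, which converge on the diamond.
-/

open Filter Finset Topology

/-- Multiplication of hyperbolic numbers `ℝ ⊕ jℝ` (with `j² = 1`), represented as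
pairs `(x, y) = x + jy`: `(a+bj)(c+dj) = ac+bd + (ad+bc)j`. -/
def hmul (z w : ℝ × ℝ) : ℝ × ℝ :=
  (z.1 * w.1 + z.2 * w.2, z.1 * w.2 + z.2 * w.1)

/-- Powers of a hyperbolic number: `z⁰ = 1`, `z^(n+1) = zⁿ · z`. -/
def hpow (z : ℝ × ℝ) : ℕ → ℝ × ℝ
  | 0 => (1, 0)
  | n + 1 => hmul (hpow z n) z

theorem hpow_eq (x y : ℝ) (n : ℕ) :
    hpow (x, y) n = (((x + y) ^ n + (x - y) ^ n) / 2, ((x + y) ^ n - (x - y) ^ n) / 2) := by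
  induction n with
  | zero => simp [hpow]
  | succ n ih =>
    rw [hpow, ih, hmul]
    ext <;> ring

theorem hasSum_hpow {x y : ℝ} (hadd : |x + y| < 1) (hsub : |x - y| < 1) :
    HasSum (hpow (x, y))
      (((1 - (x + y))⁻¹ + (1 - (x - y))⁻¹) / 2, ((1 - (x + y))⁻¹ - (1 - (x - y))⁻¹) / 2) := by
  have hs_add := hasSum_geometric_of_abs_lt_one hadd
  have hs_sub := hasSum_geometric_of_abs_lt_one hsub
  simp only [funext (hpow_eq x y)]
  exact ((hs_add.add hs_sub).div_const 2).prodMk ((hs_add.sub hs_sub).div_const 2)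

/-- In the hyperbolic numbers, the geometric series `∑ zⁿ`
converges for every `z = x + jy` with `|x + y| < 1` and `|x − y| < 1` (the open
diamond with vertices `±1, ±j`). -/
theorem stmt11_geometric_diamond (x y : ℝ) (h1 : |x + y| < 1) (h2 : |x - y| < 1) :
    ∃ S : ℝ × ℝ, Tendsto (fun N => ∑ k ∈ Finset.range N, hpow (x, y) k)
      atTop (𝓝 S) :=
  ⟨_, (hasSum_hpow h1 h2).tendsto_sum_nat⟩
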